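/- arXiv:2003.13151 — 7 statements merged into one kernel-verified Lean document; each statement's English description precedes it below -/
import Mathlib

section
/- Let G be a finite simple graph with m edges whose degeneracy is at most κ. Then the sum over all edges e = {u,v} of G of min(deg(u), deg(v)) is at most 2·m·κ. -/
/-- The degree of an edge `e = {u,v}`: `min (deg u) (deg v)`. -/
def edgeDeg {V : Type*} [Fintype V] (G : SimpleGraph V) [DecidableRel G.Adj] : Sym2 V → ℕ :=
  Sym2.lift ⟨fun u v => min (G.degree u) (G.degree v), fun u v => by simp [min_comm]⟩

lemma edgeDeg_le_of_mem {V : Type*} [Fintype V] (G : SimpleGraph V) [DecidableRel G.Adj]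
    {v : V} {e : Sym2 V} (hv : v ∈ e) : edgeDeg G e ≤ G.degree v := by
  induction e using Sym2.ind with
  | _ a b =>
    rcases Sym2.mem_iff.mp hv with rfl | rfl
    · exact min_le_left _ _
    · exact min_le_right _ _

lemma aux_sum_edgeDeg {V : Type*} [Fintype V] [DecidableEq V] (G : SimpleGraph V)
    [DecidableRel G.Adj] (κ : ℕ)
    (hdeg : ∀ S : Finset V, S.Nonempty →
      ∃ v ∈ S, (S.filter (fun w => G.Adj v w)).card ≤ κ) (S : Finset V) :
    ∑ e ∈ G.edgeFinset.filter (fun e => ∀ x ∈ e, x ∈ S), edgeDeg G e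
      ≤ κ * ∑ v ∈ S, G.degree v := by
  induction S using Finset.strongInduction with
  | _ S ih =>
    rcases S.eq_empty_or_nonempty with rfl | hS
    · have : G.edgeFinset.filter (fun e => ∀ x ∈ e, x ∈ (∅ : Finset V)) = ∅ := by
        rw [Finset.filter_eq_empty_iff]
        intro e _ h
        exact absurd (h e.out.1 (Sym2.out_fst_mem e)) (by simp)
      rw [this, Finset.sum_empty]
      exact Nat.zero_le _
    · obtain ⟨v, hv, hκ⟩ := hdeg S hS
      set A := G.edgeFinset.filter (fun e => ∀ x ∈ e, x ∈ S) with hA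
      have hsplit : ∑ e ∈ A.filter (fun e => v ∈ e), edgeDeg G e
          + ∑ e ∈ A.filter (fun e => ¬ v ∈ e), edgeDeg G e = ∑ e ∈ A, edgeDeg G e :=
        Finset.sum_filter_add_sum_filter_not A _ _
      -- bound the part containing v
      have hsub1 : A.filter (fun e => v ∈ e)
          ⊆ (S.filter (fun w => G.Adj v w)).image (fun w => s(v, w)) := by
        intro e he
        simp only [hA, Finset.mem_filter, SimpleGraph.mem_edgeFinset] at he
        obtain ⟨⟨hee, hall⟩, hve⟩ := he
        induction e using Sym2.ind with
        | _ a b =>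
          rw [SimpleGraph.mem_edgeSet] at hee
          rcases Sym2.mem_iff.mp hve with rfl | rfl
          · exact Finset.mem_image.mpr ⟨b, Finset.mem_filter.mpr
              ⟨hall b (Sym2.mem_mk_right _ _), hee⟩, rfl⟩
          · refine Finset.mem_image.mpr ⟨a, Finset.mem_filter.mpr
              ⟨hall a (Sym2.mem_mk_left _ _), hee.symm⟩, ?_⟩
            exact Sym2.eq_swap
      have hcard1 : (A.filter (fun e => v ∈ e)).card ≤ κ :=
        le_trans (Finset.card_le_card hsub1)
          (le_trans Finset.card_image_le hκ)
      have h1 : ∑ e ∈ A.filter (fun e => v ∈ e), edgeDeg G e ≤ κ * G.degree v := by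
        calc ∑ e ∈ A.filter (fun e => v ∈ e), edgeDeg G e
            ≤ (A.filter (fun e => v ∈ e)).card * G.degree v := by
              rw [← smul_eq_mul]
              exact Finset.sum_le_card_nsmul _ _ _
                (fun e he => edgeDeg_le_of_mem G (Finset.mem_filter.mp he).2)
          _ ≤ κ * G.degree v := Nat.mul_le_mul_right _ hcard1
      -- bound the rest via the induction hypothesis on S.erase v
      have hsub2 : A.filter (fun e => ¬ v ∈ e)
          ⊆ G.edgeFinset.filter (fun e => ∀ x ∈ e, x ∈ S.erase v) := by
        intro e he
        simp only [hA, Finset.mem_filter] at he ⊢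
        obtain ⟨⟨hee, hall⟩, hve⟩ := he
        exact ⟨hee, fun x hx => Finset.mem_erase.mpr
          ⟨fun h => hve (h ▸ hx), hall x hx⟩⟩
      have h2 : ∑ e ∈ A.filter (fun e => ¬ v ∈ e), edgeDeg G e
          ≤ κ * ∑ w ∈ S.erase v, G.degree w :=
        le_trans (Finset.sum_le_sum_of_subset hsub2)
          (ih _ (Finset.erase_ssubset hv))
      have hsum : G.degree v + ∑ w ∈ S.erase v, G.degree w = ∑ w ∈ S, G.degree w :=
        Finset.add_sum_erase S (fun w => G.degree w) hv
      calc ∑ e ∈ A, edgeDeg G e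
          = ∑ e ∈ A.filter (fun e => v ∈ e), edgeDeg G e
            + ∑ e ∈ A.filter (fun e => ¬ v ∈ e), edgeDeg G e := hsplit.symm
        _ ≤ κ * G.degree v + κ * ∑ w ∈ S.erase v, G.degree w := Nat.add_le_add h1 h2
        _ = κ * ∑ w ∈ S, G.degree w := by rw [← Nat.mul_add, hsum]

/-- If a finite simple graph `G` with `m` edges has degeneracy at most `κ`
(every nonempty vertex subset contains a vertex with at most `κ` neighbors inside it),
then the sum over all edges `e = {u,v}` of `min (deg u) (deg v)` is at most `2 * m * κ`. -/
theorem sum_edgeDeg_le_two_mul_card_mul_degeneracy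
    {V : Type*} [Fintype V] [DecidableEq V] (G : SimpleGraph V) [DecidableRel G.Adj]
    (κ : ℕ)
    (hdeg : ∀ S : Finset V, S.Nonempty →
      ∃ v ∈ S, (S.filter (fun w => G.Adj v w)).card ≤ κ) :
    ∑ e ∈ G.edgeFinset, edgeDeg G e ≤ 2 * G.edgeFinset.card * κ := by
  have h := aux_sum_edgeDeg G κ hdeg Finset.univ
  rw [Finset.filter_true_of_mem (fun e _ => fun x _ => Finset.mem_univ x)] at h
  rw [SimpleGraph.sum_degrees_eq_twice_card_edges] at h
  calc ∑ e ∈ G.edgeFinset, edgeDeg G e ≤ κ * (2 * G.edgeFinset.card) := h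
    _ = 2 * G.edgeFinset.card * κ := Nat.mul_comm _ _
end

section
/- Let G be a finite simple graph with degeneracy at most κ, where κ ≥ 1. Then the edge set of G can be partitioned into at most κ subsets each of which forms an acyclic subgraph (a forest). -/
/-!
Removing a vertex of degree at most `κ` repeatedly ranks the vertices injectively so that
every vertex has at most `κ` neighbours of higher rank. Each vertex labels the edges to its
higher neighbours injectively by `Fin κ`, and every edge takes the label given by its lower
end. In one label class every vertex has at most one higher neighbour, whereas the vertex of
least rank on a cycle would have two, so each class is a forest.
-/

open Finset Function

namespace SimpleGraph

variable {V : Type*}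

theorem isAcyclic_of_injective_of_higher_neighbor_unique {α : Type*} [LinearOrder α]
    (H : SimpleGraph V) {f : V → α} (hf : Injective f)
    (h : ∀ ⦃v w w'⦄, H.Adj v w → H.Adj v w' → f v < f w → f v < f w' → w = w') :
    H.IsAcyclic := by
  classical
  intro v c hc
  obtain ⟨u, hu, hmin⟩ := c.support.toFinset.exists_min_image f ⟨v, by simp⟩
  rw [List.mem_toFinset] at hu
  set c' := c.rotate u hu
  have hc' : c'.IsCycle := hc.rotate hu
  have higher : ∀ w, H.Adj u w → w ∈ c'.support → f u < f w := fun w huw hw =>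
    (hmin w (by simpa [c'] using hw)).lt_of_ne (hf.ne huw.ne)
  have hsnd := c'.adj_snd hc'.not_nil
  have hpen := (c'.adj_penultimate hc'.not_nil).symm
  exact hc'.snd_ne_penultimate <| h hsnd hpen
    (higher _ hsnd (c'.getVert_mem_support _)) (higher _ hpen (c'.getVert_mem_support _))

variable (G : SimpleGraph V)

theorem exists_injOn_rank_of_degeneracy_le [DecidableRel G.Adj] {κ : ℕ}
    (hdeg : ∀ S : Finset V, S.Nonempty → ∃ v ∈ S, #{w ∈ S | G.Adj v w} ≤ κ) (S : Finset V) :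
    ∃ f : V → ℕ, Set.InjOn f S ∧ ∀ v ∈ S, #{w ∈ S | G.Adj v w ∧ f v < f w} ≤ κ := by
  classical
  induction S using Finset.strongInduction with
  | H S ih =>
  obtain rfl | hS := S.eq_empty_or_nonempty
  · simp
  obtain ⟨v, hv, hvκ⟩ := hdeg S hS
  obtain ⟨f, hinj, hf⟩ := ih _ (S.erase_ssubset hv)
  refine ⟨fun w => if w = v then 0 else f w + 1, ?_, fun w hw => ?_⟩
  · intro x hx y hy hxy
    by_cases hxv : x = v <;> by_cases hyv : y = v
    · exact hxv.trans hyv.symm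
    · simp [hxv, hyv] at hxy
    · simp [hxv, hyv] at hxy
    · exact hinj (mem_erase.mpr ⟨hxv, hx⟩) (mem_erase.mpr ⟨hyv, hy⟩) (by simpa [hxv, hyv] using hxy)
  · by_cases hwv : w = v
    · subst hwv
      exact (card_le_card fun u hu => by simp_all).trans hvκ
    · refine (card_le_card fun u hu => ?_).trans (hf w (mem_erase.mpr ⟨hwv, hw⟩))
      by_cases huv : u = v <;> simp_all

section UpColourClass

variable {α : Type*} [LinearOrder α] {f : V → α} {κ : ℕ}
  (c : ∀ v, {w // G.Adj v w ∧ f v < f w} → Fin κ)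

def upColourClass (i : Fin κ) : SimpleGraph V :=
  fromRel fun v w => ∃ h, c v ⟨w, h⟩ = i

variable {G c}

theorem upColourClass_adj_of_lt {i : Fin κ} {v w : V} (hvw : f v < f w) :
    (G.upColourClass c i).Adj v w ↔ ∃ h, c v ⟨w, h⟩ = i := by
  refine ⟨?_, fun h => ⟨ne_of_apply_ne f hvw.ne, Or.inl h⟩⟩
  rintro ⟨-, h | ⟨⟨-, hwv⟩, -⟩⟩
  · exact h
  · exact absurd hwv hvw.not_gt

theorem upColourClass_le (i : Fin κ) : G.upColourClass c i ≤ G := by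
  rintro v w ⟨-, ⟨⟨h, -⟩, -⟩ | ⟨⟨h, -⟩, -⟩⟩
  exacts [h, h.symm]

theorem isAcyclic_upColourClass (hf : Injective f) (hc : ∀ v, Injective (c v)) (i : Fin κ) :
    (G.upColourClass c i).IsAcyclic :=
  isAcyclic_of_injective_of_higher_neighbor_unique _ hf fun v _ _ hw hw' hvw hvw' => by
    obtain ⟨_, rfl⟩ := (upColourClass_adj_of_lt hvw).mp hw
    obtain ⟨_, hi⟩ := (upColourClass_adj_of_lt hvw').mp hw'
    exact congrArg Subtype.val (hc v hi.symm)

theorem existsUnique_upColourClass_adj (hf : Injective f) {u v : V} (huv : G.Adj u v) :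
    ∃! i, (G.upColourClass c i).Adj u v := by
  wlog h : f u < f v generalizing u v
  · simpa only [adj_comm _ u v] using this huv.symm ((hf.ne huv.ne).lt_or_gt.resolve_left h)
  refine ⟨c u ⟨v, huv, h⟩, (upColourClass_adj_of_lt h).mpr ⟨_, rfl⟩, fun j hj => ?_⟩
  obtain ⟨_, rfl⟩ := (upColourClass_adj_of_lt h).mp hj
  rfl

end UpColourClass

end SimpleGraph

open SimpleGraph in
theorem forest_partition_of_degeneracy_le_general
    {V : Type*} [Fintype V] (G : SimpleGraph V) [DecidableRel G.Adj]
    (κ : ℕ)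
    (hdeg : ∀ S : Finset V, S.Nonempty →
      ∃ v ∈ S, (S.filter (fun w => G.Adj v w)).card ≤ κ) :
    ∃ F : Fin κ → SimpleGraph V,
      (∀ i, F i ≤ G) ∧ (∀ i, (F i).IsAcyclic) ∧
        ∀ u v : V, G.Adj u v → ∃! i, (F i).Adj u v := by
  obtain ⟨f, hf, hup⟩ := G.exists_injOn_rank_of_degeneracy_le hdeg Finset.univ
  replace hf : Function.Injective f := Set.injOn_univ.mp (by simpa using hf)
  have hemb : ∀ v, Nonempty ({w // G.Adj v w ∧ f v < f w} ↪ Fin κ) := fun v =>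
    Function.Embedding.nonempty_of_card_le <| by
      simpa [Fintype.card_subtype] using hup v (Finset.mem_univ v)
  let c v := (hemb v).some
  exact ⟨G.upColourClass fun v => c v, upColourClass_le,
    isAcyclic_upColourClass hf fun v => (c v).injective,
    fun _ _ => existsUnique_upColourClass_adj hf⟩

/-- If a finite simple graph `G` has degeneracy at most `κ` (with `κ ≥ 1`), then its
edge set can be partitioned into (at most) `κ` subsets each of which forms a forest
(an acyclic subgraph). -/
theorem forest_partition_of_degeneracy_le
    {V : Type*} [Fintype V] [DecidableEq V] (G : SimpleGraph V) [DecidableRel G.Adj]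
    (κ : ℕ) (hκ : 1 ≤ κ)
    (hdeg : ∀ S : Finset V, S.Nonempty →
      ∃ v ∈ S, (S.filter (fun w => G.Adj v w)).card ≤ κ) :
    ∃ F : Fin κ → SimpleGraph V,
      (∀ i, F i ≤ G) ∧ (∀ i, (F i).IsAcyclic) ∧
        ∀ u v : V, G.Adj u v → ∃! i, (F i).Adj u v :=
  forest_partition_of_degeneracy_le_general G κ hdeg
end

section
/- Let G be a finite simple graph with T triangles and degeneracy at most κ (κ ≥ 1), and let ε > 0. Call an edge e ε-heavy if ε · t_e > κ. Then the number of triangles of G all three of whose edges are ε-heavy is at most 6·ε·T. -/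
/-!
Let `H` be the subgraph of heavy edges of `G`. A triangle all of whose edges are heavy is a
triangle of `H`, and `H` inherits the degeneracy of `G`. Removing a vertex `v` of degree
`d ≤ κ` destroys at most `d² ≤ κ d` triangles and exactly `d` edges, so `H` has at most
`κ |E(H)|` triangles. Each heavy edge lies in more than `κ / ε` triangles, and each triangle
meets at most `6` elements of `Sym2 V` (its three edges and three diagonals), so
`κ |E(H)| ≤ ε ∑ₑ tₑ ≤ 6 ε T`.
-/

/-- The number of triangles (3-cliques) of `G` containing the edge `e`, i.e. `t_e`. -/
def edgeTri {V : Type*} [Fintype V] [DecidableEq V] (G : SimpleGraph V)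
    [DecidableRel G.Adj] (e : Sym2 V) : ℕ :=
  ((G.cliqueFinset 3).filter (fun s => e ∈ s.sym2)).card

open Finset

namespace Finset

variable {α : Type*} [DecidableEq α]

theorem mem_sym2_erase_iff {s : Finset α} {a : α} {e : Sym2 α} :
    e ∈ (s.erase a).sym2 ↔ e ∈ s.sym2 ∧ a ∉ e := by
  simp only [mem_sym2_iff, mem_erase]
  exact ⟨fun h => ⟨fun b hb => (h b hb).2, fun ha => (h a ha).1 rfl⟩,
    fun ⟨h, ha⟩ b hb => ⟨fun hba => ha (hba ▸ hb), h b hb⟩⟩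

theorem card_filter_subset_eq_add_card_filter_subset_erase (𝒜 : Finset (Finset α))
    (s : Finset α) (a : α) :
    #{t ∈ 𝒜 | t ⊆ s} = #{t ∈ 𝒜 | t ⊆ s ∧ a ∈ t} + #{t ∈ 𝒜 | t ⊆ s.erase a} := by
  rw [← card_filter_add_card_filter_not (s := {t ∈ 𝒜 | t ⊆ s}) (a ∈ ·), filter_filter,
    filter_filter]
  simp only [subset_erase]

theorem card_filter_mem_sym2_eq_add_card_filter_mem_sym2_erase (E : Finset (Sym2 α))
    (s : Finset α) (a : α) :
    #{e ∈ E | e ∈ s.sym2} = #{e ∈ E | e ∈ s.sym2 ∧ a ∈ e} + #{e ∈ E | e ∈ (s.erase a).sym2} := by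
  rw [← card_filter_add_card_filter_not (s := {e ∈ E | e ∈ s.sym2}) (a ∈ ·), filter_filter,
    filter_filter]
  simp only [mem_sym2_erase_iff]

end Finset

namespace SimpleGraph

variable {V : Type*}

def IsDegenerate (G : SimpleGraph V) [DecidableRel G.Adj] (k : ℕ) : Prop :=
  ∀ S : Finset V, S.Nonempty → ∃ v ∈ S, #{w ∈ S | G.Adj v w} ≤ k

theorem IsDegenerate.anti {G H : SimpleGraph V} [DecidableRel G.Adj] [DecidableRel H.Adj]
    {k : ℕ} (hG : G.IsDegenerate k) (hHG : H ≤ G) : H.IsDegenerate k := by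
  intro S hS
  obtain ⟨v, hv, hdeg⟩ := hG S hS
  exact ⟨v, hv, (card_le_card (monotone_filter_right S fun _ _ h => hHG h)).trans hdeg⟩

variable [Fintype V] [DecidableEq V] (G : SimpleGraph V) [DecidableRel G.Adj]

theorem card_triangles_subset_containing_le (S : Finset V) (v : V) :
    #{t ∈ G.cliqueFinset 3 | t ⊆ S ∧ v ∈ t} ≤ #{w ∈ S | G.Adj v w} * #{w ∈ S | G.Adj v w} := by
  set N := {w ∈ S | G.Adj v w}
  calc #{t ∈ G.cliqueFinset 3 | t ⊆ S ∧ v ∈ t}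
      ≤ #((N ×ˢ N).image fun p => {v, p.1, p.2}) := card_le_card ?_
    _ ≤ #N * #N := card_image_le.trans (card_product N N).le
  intro t ht
  simp only [mem_filter, mem_cliqueFinset_iff] at ht
  obtain ⟨htri, htS, hvt⟩ := ht
  obtain ⟨a, b, -, hab⟩ := card_eq_two.mp (by rw [card_erase_of_mem hvt, htri.card_eq])
  have hat : a ∈ t.erase v := by simp [hab]
  have hbt : b ∈ t.erase v := by simp [hab]
  have hN {w} (hw : w ∈ t.erase v) : w ∈ N :=
    mem_filter.mpr ⟨htS (mem_of_mem_erase hw),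
      htri.1 hvt (mem_of_mem_erase hw) (ne_of_mem_erase hw).symm⟩
  exact mem_image.mpr ⟨(a, b), mem_product.mpr ⟨hN hat, hN hbt⟩, by rw [← hab, insert_erase hvt]⟩

theorem card_neighbor_filter_le_card_incident_edges {S : Finset V} {v : V} (hv : v ∈ S) :
    #{w ∈ S | G.Adj v w} ≤ #{e ∈ G.edgeFinset | e ∈ S.sym2 ∧ v ∈ e} := by
  refine card_le_card_of_injOn (fun w => s(v, w)) (fun w hw => ?_) fun w _ w' _ h => ?_
  · obtain ⟨hwS, hvw⟩ := mem_filter.mp hw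
    simp [hvw, hv, hwS]
  · exact Sym2.congr_right.mp h

variable {G} in
theorem IsDegenerate.card_triangles_subset_le {k : ℕ} (hG : G.IsDegenerate k) (S : Finset V) :
    #{t ∈ G.cliqueFinset 3 | t ⊆ S} ≤ k * #{e ∈ G.edgeFinset | e ∈ S.sym2} := by
  induction S using Finset.strongInduction with
  | H S ih =>
  obtain rfl | hS := S.eq_empty_or_nonempty
  · rw [filter_false_of_mem fun t ht h => by simp [subset_empty.mp h] at ht]
    simp
  obtain ⟨v, hvS, hdeg⟩ := hG S hS
  calc #{t ∈ G.cliqueFinset 3 | t ⊆ S}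
      = #{t ∈ G.cliqueFinset 3 | t ⊆ S ∧ v ∈ t} + #{t ∈ G.cliqueFinset 3 | t ⊆ S.erase v} :=
        card_filter_subset_eq_add_card_filter_subset_erase _ _ _
    _ ≤ #{w ∈ S | G.Adj v w} * #{w ∈ S | G.Adj v w} +
          k * #{e ∈ G.edgeFinset | e ∈ (S.erase v).sym2} :=
        add_le_add (G.card_triangles_subset_containing_le S v) (ih _ (erase_ssubset hvS))
    _ ≤ k * #{e ∈ G.edgeFinset | e ∈ S.sym2 ∧ v ∈ e} +
          k * #{e ∈ G.edgeFinset | e ∈ (S.erase v).sym2} :=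
        Nat.add_le_add_right
          (Nat.mul_le_mul hdeg (G.card_neighbor_filter_le_card_incident_edges hvS)) _
    _ = k * #{e ∈ G.edgeFinset | e ∈ S.sym2} := by
        rw [← mul_add, card_filter_mem_sym2_eq_add_card_filter_mem_sym2_erase _ S v]

variable {G} in
theorem IsDegenerate.card_cliqueFinset_three_le {k : ℕ} (hG : G.IsDegenerate k) :
    #(G.cliqueFinset 3) ≤ k * #G.edgeFinset := by
  simpa using hG.card_triangles_subset_le univ

theorem sum_edgeTri_le (E : Finset (Sym2 V)) :
    ∑ e ∈ E, edgeTri G e ≤ 6 * #(G.cliqueFinset 3) := by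
  calc ∑ e ∈ E, edgeTri G e = ∑ t ∈ G.cliqueFinset 3, #{e ∈ E | e ∈ t.sym2} := by
        simp only [edgeTri, card_filter]
        exact sum_comm
    _ ≤ ∑ t ∈ G.cliqueFinset 3, #t.sym2 :=
        sum_le_sum fun t _ => card_le_card fun e he => (mem_filter.mp he).2
    _ = ∑ _t ∈ G.cliqueFinset 3, 6 :=
        sum_congr rfl fun t ht => by rw [card_sym2, (mem_cliqueFinset_iff.mp ht).card_eq]; rfl
    _ = 6 * #(G.cliqueFinset 3) := by rw [sum_const, smul_eq_mul, mul_comm]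

theorem cliqueFinset_deleteEdges (s : Set (Sym2 V)) [DecidablePred (· ∈ s)] (n : ℕ) :
    (G.deleteEdges s).cliqueFinset n =
      {t ∈ G.cliqueFinset n | ∀ u ∈ t, ∀ v ∈ t, u ≠ v → s(u, v) ∉ s} := by
  ext t
  simp only [mem_cliqueFinset_iff, mem_filter, isNClique_iff, IsClique, Set.Pairwise,
    deleteEdges_adj, mem_coe]
  grind

end SimpleGraph

open SimpleGraph

theorem heavy_triangles_le_general
    {V : Type*} [Fintype V] [DecidableEq V] (G : SimpleGraph V) [DecidableRel G.Adj]
    (κ : ℕ) (ε : ℝ) (hε : 0 < ε)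
    (hdeg : ∀ S : Finset V, S.Nonempty →
      ∃ v ∈ S, (S.filter (fun w => G.Adj v w)).card ≤ κ) :
    (((G.cliqueFinset 3).filter (fun s => ∀ u ∈ s, ∀ v ∈ s, u ≠ v →
        (κ : ℝ) < ε * (edgeTri G s(u, v) : ℝ))).card : ℝ)
      ≤ 6 * ε * ((G.cliqueFinset 3).card : ℝ) := by
  classical
  set H := G.deleteEdges {e | ε * edgeTri G e ≤ κ}
  have heavy_triangles : {s ∈ G.cliqueFinset 3 | ∀ u ∈ s, ∀ v ∈ s, u ≠ v →
      (κ : ℝ) < ε * edgeTri G s(u, v)} = H.cliqueFinset 3 := by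
    simp only [H, cliqueFinset_deleteEdges, Set.mem_ofPred_eq, not_le]
  have heavy_edges : ∀ e ∈ H.edgeFinset, (κ : ℝ) ≤ ε * edgeTri G e := fun e he => by
    simp only [H, mem_edgeFinset, edgeSet_deleteEdges, Set.mem_sdiff, Set.mem_ofPred_eq,
      not_le] at he
    exact he.2.le
  have hH : H.IsDegenerate κ := IsDegenerate.anti hdeg (G.deleteEdges_le _)
  calc (#{s ∈ G.cliqueFinset 3 | ∀ u ∈ s, ∀ v ∈ s, u ≠ v →
        (κ : ℝ) < ε * edgeTri G s(u, v)} : ℝ)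
      = #(H.cliqueFinset 3) := by rw [heavy_triangles]
    _ ≤ κ * #H.edgeFinset := by exact_mod_cast hH.card_cliqueFinset_three_le
    _ ≤ ∑ e ∈ H.edgeFinset, ε * edgeTri G e := by
        simpa [mul_comm] using card_nsmul_le_sum _ _ _ heavy_edges
    _ = ε * (∑ e ∈ H.edgeFinset, edgeTri G e : ℕ) := by rw [← mul_sum, Nat.cast_sum]
    _ ≤ ε * (6 * #(G.cliqueFinset 3) : ℕ) := by gcongr; exact G.sum_edgeTri_le _
    _ = 6 * ε * #(G.cliqueFinset 3) := by push_cast; ring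

/-- Let `G` have `T` triangles and degeneracy at most `κ ≥ 1`, and let `ε > 0`.
An edge `e` is `ε`-heavy if `ε * t_e > κ`.  Then the number of triangles of `G`
all three of whose edges are `ε`-heavy is at most `6 * ε * T`. -/
theorem heavy_triangles_le
    {V : Type*} [Fintype V] [DecidableEq V] (G : SimpleGraph V) [DecidableRel G.Adj]
    (κ : ℕ) (hκ : 1 ≤ κ) (ε : ℝ) (hε : 0 < ε)
    (hdeg : ∀ S : Finset V, S.Nonempty →
      ∃ v ∈ S, (S.filter (fun w => G.Adj v w)).card ≤ κ) :
    (((G.cliqueFinset 3).filter (fun s => ∀ u ∈ s, ∀ v ∈ s, u ≠ v →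
        (κ : ℝ) < ε * (edgeTri G s(u, v) : ℝ))).card : ℝ)
      ≤ 6 * ε * ((G.cliqueFinset 3).card : ℝ) :=
  heavy_triangles_le_general G κ ε hε hdeg
end

section
/- Fix integers N, p, q ≥ 1 and Boolean strings x, y : Fin N → Bool. Define the simple graph G_{x,y} on the vertex set A ⊕ B ⊕ (Fin N × Fin q), where A and B are disjoint copies of Fin p, by: every vertex of A is adjacent to every vertex of B; for each i, every vertex of the block V_i := {i} × Fin q is adjacent to every vertex of A if and only if x(i) = true, and adjacent to every vertex of B if and only if y(i) = true; there are no other edges. Then G_{x,y} contains a triangle if and only if there exists an index i with x(i) = true and y(i) = true. -/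
/-- The set-disjointness reduction gadget: vertices are `A ⊕ B ⊕ (Fin N × Fin q)` with
`A`, `B` disjoint copies of `Fin p`; every vertex of `A` is adjacent to every vertex of
`B`; each block `V_i = {i} × Fin q` is completely joined to `A` iff `x i = true` and to
`B` iff `y i = true`; there are no other edges. -/
def gadget (N p q : ℕ) (x y : Fin N → Bool) :
    SimpleGraph ((Fin p ⊕ Fin p) ⊕ (Fin N × Fin q)) :=
  SimpleGraph.fromRel (fun a b =>
    match a, b with
    | Sum.inl (Sum.inl _), Sum.inl (Sum.inr _) => True
    | Sum.inl (Sum.inl _), Sum.inr iv => x iv.1 = true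
    | Sum.inl (Sum.inr _), Sum.inr iv => y iv.1 = true
    | _, _ => False)

/-- The gadget graph contains a triangle (3-clique) if and only if there is an index `i`
with `x i = true` and `y i = true`. -/
theorem gadget_has_triangle_iff (N p q : ℕ) (hN : 1 ≤ N) (hp : 1 ≤ p) (hq : 1 ≤ q)
    (x y : Fin N → Bool) :
    (∃ s : Finset ((Fin p ⊕ Fin p) ⊕ (Fin N × Fin q)), (gadget N p q x y).IsNClique 3 s)
      ↔ ∃ i : Fin N, x i = true ∧ y i = true := by
  constructor
  · rintro ⟨s, hs⟩
    rw [SimpleGraph.is3Clique_iff] at hs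
    obtain ⟨a, b, c, hab, hac, hbc, -⟩ := hs
    rw [gadget, SimpleGraph.fromRel_adj] at hab hac hbc
    rcases a with (a | a) | a <;> rcases b with (b | b) | b <;> rcases c with (c | c) | c <;>
      simp_all <;> aesop
  · rintro ⟨i, hx, hy⟩
    refine ⟨{Sum.inl (Sum.inl ⟨0, hp⟩), Sum.inl (Sum.inr ⟨0, hp⟩), Sum.inr (i, ⟨0, hq⟩)}, ?_⟩
    rw [SimpleGraph.is3Clique_iff]
    refine ⟨_, _, _, ?_, ?_, ?_, rfl⟩ <;>
      simp [gadget, SimpleGraph.fromRel_adj, hx, hy]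
end

section
/- Fix integers N, p, q ≥ 1 and Boolean strings x, y : Fin N → Bool. Define the simple graph G_{x,y} on the vertex set A ⊕ B ⊕ (Fin N × Fin q), where A and B are disjoint copies of Fin p, by: every vertex of A is adjacent to every vertex of B; for each i, every vertex of the block V_i := {i} × Fin q is adjacent to every vertex of A if and only if x(i) = true, and adjacent to every vertex of B if and only if y(i) = true; there are no other edges. If there exists an index i with x(i) = true and y(i) = true, then G_{x,y} contains at least p²·q triangles. -/
/-- If there is an index `i` with `x i = true` and `y i = true`, then the gadget graph
contains at least `p² * q` triangles (3-cliques). -/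
theorem gadget_triangles_ge (N p q : ℕ) (hN : 1 ≤ N) (hp : 1 ≤ p) (hq : 1 ≤ q)
    (x y : Fin N → Bool) (h : ∃ i : Fin N, x i = true ∧ y i = true) :
    p ^ 2 * q ≤ {s : Finset ((Fin p ⊕ Fin p) ⊕ (Fin N × Fin q)) |
      (gadget N p q x y).IsNClique 3 s}.ncard := by
  obtain ⟨i, hx, hy⟩ := h
  set V := (Fin p ⊕ Fin p) ⊕ (Fin N × Fin q)
  set f : Fin p × Fin p × Fin q → Finset V := fun t =>
    {Sum.inl (Sum.inl t.1), Sum.inl (Sum.inr t.2.1), Sum.inr (i, t.2.2)}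
  have hinj : Function.Injective f := by
    rintro ⟨a, b, v⟩ ⟨a', b', v'⟩ hfe
    have h1 : (Sum.inl (Sum.inl a) : V) ∈ f (a', b', v') := by
      rw [← hfe]; simp [f]
    have h2 : (Sum.inl (Sum.inr b) : V) ∈ f (a', b', v') := by
      rw [← hfe]; simp [f]
    have h3 : (Sum.inr (i, v) : V) ∈ f (a', b', v') := by
      rw [← hfe]; simp [f]
    simp [f] at h1 h2 h3
    simp [h1, h2, h3]
  have hsub : Set.range f ⊆ {s : Finset V | (gadget N p q x y).IsNClique 3 s} := by
    rintro s ⟨⟨a, b, v⟩, rfl⟩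
    constructor
    · intro u hu w hw huw
      simp [f] at hu hw
      rcases hu with rfl | rfl | rfl <;> rcases hw with rfl | rfl | rfl <;>
        simp_all [gadget, SimpleGraph.fromRel_adj, hx, hy]
    · simp [f]
  calc p ^ 2 * q = (Set.range f).ncard := by
        rw [Set.ncard_eq_toFinset_card', Set.toFinset_range,
          Finset.card_image_of_injective _ hinj]
        simp; ring
    _ ≤ _ := Set.ncard_le_ncard hsub (Set.toFinite _)
end

section
/- Fix integers N, p, q ≥ 1 and Boolean strings x, y : Fin N → Bool. Define the simple graph G_{x,y} on the vertex set A ⊕ B ⊕ (Fin N × Fin q), where A and B are disjoint copies of Fin p, by: every vertex of A is adjacent to every vertex of B; for each i, every vertex of the block V_i := {i} × Fin q is adjacent to every vertex of A if and only if x(i) = true, and adjacent to every vertex of B if and only if y(i) = true; there are no other edges. Then G_{x,y} has degeneracy at most 2p, i.e., every nonempty subset S of its vertex set contains a vertex having at most 2p neighbors inside S. -/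
open Classical in
/-- The gadget graph always has degeneracy at most `2p`: every nonempty subset `S` of
its vertex set contains a vertex having at most `2p` neighbors inside `S`. -/
theorem gadget_degeneracy_le (N p q : ℕ) (hN : 1 ≤ N) (hp : 1 ≤ p) (hq : 1 ≤ q)
    (x y : Fin N → Bool) :
    ∀ S : Finset ((Fin p ⊕ Fin p) ⊕ (Fin N × Fin q)), S.Nonempty →
      ∃ v ∈ S, (S.filter (fun w => (gadget N p q x y).Adj v w)).card ≤ 2 * p := by
  intro S hS
  set L : Finset ((Fin p ⊕ Fin p) ⊕ (Fin N × Fin q)) :=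
    (Finset.univ : Finset (Fin p ⊕ Fin p)).map ⟨Sum.inl, Sum.inl_injective⟩ with hL
  have hLcard : L.card = 2 * p := by
    simp [hL, two_mul]
  by_cases h : ∃ v ∈ S, ∃ iv, v = Sum.inr iv
  · obtain ⟨v, hv, iv, rfl⟩ := h
    refine ⟨_, hv, ?_⟩
    rw [← hLcard]
    apply Finset.card_le_card
    intro w hw
    simp only [Finset.mem_filter] at hw
    obtain ⟨-, hadj⟩ := hw
    cases w with
    | inl a => simp [hL]
    | inr b =>
      exfalso
      simp [gadget, SimpleGraph.fromRel_adj] at hadj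
  · push_neg at h
    obtain ⟨v, hv⟩ := hS
    refine ⟨v, hv, ?_⟩
    rw [← hLcard]
    apply Finset.card_le_card
    intro w hw
    simp only [Finset.mem_filter] at hw
    have hwS := hw.1
    cases w with
    | inl a => simp [hL]
    | inr b => exact absurd rfl (h _ hwS b)
end

section
/- Fix integers N, p, q ≥ 1 and Boolean strings x, y : Fin N → Bool such that no index i satisfies x(i) = true and y(i) = true. Define the simple graph G_{x,y} on the vertex set A ⊕ B ⊕ (Fin N × Fin q), where A and B are disjoint copies of Fin p, by: every vertex of A is adjacent to every vertex of B; for each i, every vertex of the block V_i := {i} × Fin q is adjacent to every vertex of A if and only if x(i) = true, and adjacent to every vertex of B if and only if y(i) = true; there are no other edges. Then G_{x,y} has degeneracy at most p, i.e., every nonempty subset S of its vertex set contains a vertex having at most p neighbors inside S. -/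
open Classical in
lemma card_le_of_subset_image {α : Type*} [DecidableEq α] {p : ℕ}
    (T : Finset α) (f : Fin p → α) (h : ∀ w ∈ T, ∃ a, w = f a) :
    T.card ≤ p := by
  calc T.card ≤ (Finset.univ.image f).card := by
        apply Finset.card_le_card
        intro w hw
        obtain ⟨a, rfl⟩ := h w hw
        exact Finset.mem_image_of_mem f (Finset.mem_univ a)
    _ ≤ (Finset.univ : Finset (Fin p)).card := Finset.card_image_le
    _ = p := by simp

open Classical in
/-- If no index `i` satisfies `x i = true` and `y i = true`, then the gadget graph has
degeneracy at most `p`: every nonempty subset `S` of its vertex set contains a vertex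
having at most `p` neighbors inside `S`. -/
theorem gadget_degeneracy_le_of_disjoint (N p q : ℕ) (hN : 1 ≤ N) (hp : 1 ≤ p)
    (hq : 1 ≤ q) (x y : Fin N → Bool)
    (hdisj : ∀ i : Fin N, ¬(x i = true ∧ y i = true)) :
    ∀ S : Finset ((Fin p ⊕ Fin p) ⊕ (Fin N × Fin q)), S.Nonempty →
      ∃ v ∈ S, (S.filter (fun w => (gadget N p q x y).Adj v w)).card ≤ p := by
  intro S hS
  by_cases h : ∃ iv : Fin N × Fin q, Sum.inr iv ∈ S
  · obtain ⟨iv, hiv⟩ := h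
    refine ⟨Sum.inr iv, hiv, ?_⟩
    by_cases hx : x iv.1 = true
    · have hy : ¬ y iv.1 = true := fun h' => hdisj iv.1 ⟨hx, h'⟩
      apply card_le_of_subset_image _ (fun a : Fin p => (Sum.inl (Sum.inl a)))
      intro w hw
      simp only [Finset.mem_filter, gadget, SimpleGraph.fromRel_adj] at hw
      obtain ⟨-, hne, hadj⟩ := hw
      rcases w with (a | b) | jv
      · exact ⟨a, rfl⟩
      · exfalso; simpa [hy] using hadj
      · exfalso; simpa using hadj
    · apply card_le_of_subset_image _ (fun b : Fin p => (Sum.inl (Sum.inr b)))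
      intro w hw
      simp only [Finset.mem_filter, gadget, SimpleGraph.fromRel_adj] at hw
      obtain ⟨-, hne, hadj⟩ := hw
      rcases w with (a | b) | jv
      · exfalso; simpa [hx] using hadj
      · exact ⟨b, rfl⟩
      · exfalso; simpa using hadj
  · push_neg at h
    obtain ⟨v, hv⟩ := hS
    refine ⟨v, hv, ?_⟩
    rcases v with (a | b) | jv
    · apply card_le_of_subset_image _ (fun b : Fin p => (Sum.inl (Sum.inr b)))
      intro w hw
      simp only [Finset.mem_filter, gadget, SimpleGraph.fromRel_adj] at hw
      obtain ⟨hwS, hne, hadj⟩ := hw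
      rcases w with (a' | b') | jv
      · exfalso; simpa using hadj
      · exact ⟨b', rfl⟩
      · exact absurd hwS (h jv)
    · apply card_le_of_subset_image _ (fun a : Fin p => (Sum.inl (Sum.inl a)))
      intro w hw
      simp only [Finset.mem_filter, gadget, SimpleGraph.fromRel_adj] at hw
      obtain ⟨hwS, hne, hadj⟩ := hw
      rcases w with (a' | b') | jv
      · exact ⟨a', rfl⟩
      · exfalso; simpa using hadj
      · exact absurd hwS (h jv)
    · exact absurd hv (h jv)
end
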